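/- arXiv:2107.08023 — 2 statements merged into one kernel-verified Lean document; each statement's English description precedes it below -/
import Mathlib

section
/- Let n ≥ 2 and 2 ≤ k ≤ n. Let (Z_1,…,Z_n,Z) be nonnegative random variables whose joint distribution has a density on ℝ^{n+1} with respect to Lebesgue measure that is invariant under every permutation of its first n arguments (in particular the Z_i are almost surely pairwise distinct). Let T = Z_{n-k+1:n} + min(Z_{n-k+2:n} − Z_{n-k+1:n}, Z). Then for all 0 ≤ t ≤ s, P(T > s, t ≤ Z_{n-k+1:n} ≤ s) = n·C(n−1,n−k)·P(Z_1 > s, …, Z_{k−1} > s, Z_n + Z > s, Z_k < Z_n, …, Z_{n−1} < Z_n, t ≤ Z_n ≤ s). -/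
/-!
Write `r = n - k + 1`, so that `T > s` iff `s < Z_{r+1:n}` and `s < Z_{r:n} + Z`. Order statistics
are handled through counting: `Z_{r:n} ≤ u` iff at least `r` of the `Z_j` are `≤ u`. Hence, when
the `Z_j` are distinct, `Z_{r:n} ≤ s < Z_{r+1:n}` says that exactly `k - 1` components, forming a
set `A`, exceed `s`, and then `Z_{r:n}` is the largest remaining component `Z_i`. Up to the null
event of ties, the left-hand event is therefore the disjoint union, over the `n · C(n-1, k-1)`
pairs `(A, i)` with `i ∉ A`, of the events on which `A` and `i` play these roles. A permutation of
the components carries any such pair to `({1, …, k-1}, n)`, and the symmetric density makes all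
these events equiprobable.
-/

open MeasureTheory ProbabilityTheory

/-- `orderStat Z j ω` is the `j`-th smallest value (1-indexed) among `Z 0 ω, …, Z (n-1) ω`. -/
noncomputable def orderStat {Ω : Type*} {n : ℕ} (Z : Fin n → Ω → ℝ) (j : ℕ) (ω : Ω) : ℝ :=
  ((List.ofFn fun i => Z i ω).mergeSort (fun x y => x ≤ y)).getD (j - 1) 0

open Finset
open scoped ENNReal

theorem lt_add_min_sub_iff {α : Type*} [AddCommGroup α] [LinearOrder α] [IsOrderedAddMonoid α]
    {s a b c : α} : s < a + min (b - a) c ↔ s < b ∧ s < a + c := by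
  rw [← min_add_add_left, add_sub_cancel, lt_min_iff]

theorem List.countP_ofFn {α : Type*} {n : ℕ} (v : Fin n → α) (p : α → Prop) [DecidablePred p] :
    (List.ofFn v).countP (p ·) = #{i | p (v i)} := by
  rw [← Multiset.coe_countP, ← Fin.univ_val_map, Multiset.countP_map]
  rfl

theorem List.Pairwise.getElem_le_iff_lt_countP {α : Type*} [LinearOrder α] {l : List α}
    (hl : l.Pairwise (· ≤ ·)) {m : ℕ} (hm : m < l.length) (u : α) :
    l[m] ≤ u ↔ m < l.countP (· ≤ u) := by
  have mono : ∀ i j (hi : i < l.length) (hj : j < l.length), i ≤ j → l[i] ≤ l[j] := by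
    intro i j hi hj hij
    rcases hij.lt_or_eq with hij | rfl
    · exact List.pairwise_iff_getElem.1 hl i j hi hj hij
    · exact le_rfl
  constructor
  · intro h
    have htake : (l.take (m + 1)).countP (· ≤ u) = m + 1 := by
      rw [List.countP_eq_length.2, List.length_take]
      · omega
      intro a ha
      obtain ⟨i, hi, rfl⟩ := List.mem_iff_getElem.1 ha
      simp only [List.getElem_take, decide_eq_true_eq]
      exact (mono _ _ _ hm (by rw [List.length_take] at hi; omega)).trans h
    rw [← List.take_append_drop (m + 1) l, List.countP_append, htake]
    omega
  · intro h
    by_contra hlt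
    have hdrop : (l.drop m).countP (· ≤ u) = 0 := by
      rw [List.countP_eq_zero]
      intro a ha
      obtain ⟨i, hi, rfl⟩ := List.mem_iff_getElem.1 ha
      simp only [List.getElem_drop, decide_eq_true_eq, not_le]
      exact (not_le.1 hlt).trans_le (mono _ _ hm _ (by omega))
    rw [← List.take_append_drop m l, List.countP_append, hdrop] at h
    have := List.countP_le_length (p := (· ≤ u)) (l := l.take m)
    rw [List.length_take] at this
    omega

section OrderStatistics

variable {Ω : Type*} {n : ℕ} (Z : Fin n → Ω → ℝ) (ω : Ω) {r : ℕ}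

theorem orderStat_le_iff (hr : 1 ≤ r) (hrn : r ≤ n) (u : ℝ) :
    orderStat Z r ω ≤ u ↔ r ≤ #{i | Z i ω ≤ u} := by
  have hsorted := List.pairwise_mergeSort' (· ≤ ·) (List.ofFn fun i => Z i ω)
  have hlen : r - 1 < ((List.ofFn fun i => Z i ω).mergeSort (fun x y => x ≤ y)).length := by
    rw [List.length_mergeSort, List.length_ofFn]; omega
  rw [orderStat, List.getD_eq_getElem _ _ hlen, hsorted.getElem_le_iff_lt_countP,
    (List.mergeSort_perm _ _).countP_eq, List.countP_ofFn]
  omega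

theorem exists_eq_orderStat (hr : 1 ≤ r) (hrn : r ≤ n) : ∃ i, Z i ω = orderStat Z r ω := by
  have hlen : r - 1 < ((List.ofFn fun i => Z i ω).mergeSort (fun x y => x ≤ y)).length := by
    rw [List.length_mergeSort, List.length_ofFn]; omega
  rw [orderStat, List.getD_eq_getElem _ _ hlen]
  exact List.mem_ofFn.1 ((List.mergeSort_perm _ _).mem_iff.1 (List.getElem_mem hlen))

end OrderStatistics

section Pivot

variable {α : Type*} [LinearOrder α] {n : ℕ} {x : Fin n → α} {s : α} {A A' : Finset (Fin n)}
  {i i' : Fin n}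

def IsPivot (x : Fin n → α) (s : α) (A : Finset (Fin n)) (i : Fin n) : Prop :=
  (∀ j ∈ A, s < x j) ∧ (∀ j ∉ A, j ≠ i → x j < x i) ∧ x i ≤ s

theorem IsPivot.notMem (h : IsPivot x s A i) : i ∉ A :=
  fun hi => (h.1 i hi).not_ge h.2.2

theorem IsPivot.filter_le_eq_compl (h : IsPivot x s A i) : ({j | x j ≤ s} : Finset _) = Aᶜ := by
  ext j
  simp only [mem_filter, mem_univ, true_and, mem_compl]
  refine ⟨fun hj hjA => (h.1 j hjA).not_ge hj, fun hjA => ?_⟩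
  rcases eq_or_ne j i with rfl | hji
  · exact h.2.2
  · exact (h.2.1 j hjA hji).le.trans h.2.2

theorem IsPivot.unique (h : IsPivot x s A i) (h' : IsPivot x s A' i') : A = A' ∧ i = i' := by
  have hA : A = A' := compl_injective (h.filter_le_eq_compl.symm.trans h'.filter_le_eq_compl)
  subst hA
  refine ⟨rfl, by_contra fun hne => ?_⟩
  exact (h.2.1 i' h'.notMem (Ne.symm hne)).not_gt (h'.2.1 i h.notMem hne)

end Pivot

section OrderStatisticsPivot

variable {Ω : Type*} {n r : ℕ} {Z : Fin n → Ω → ℝ} {ω : Ω} {s : ℝ}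

theorem orderStat_eq_of_isPivot {A : Finset (Fin n)} {i : Fin n} (h : IsPivot (Z · ω) s A i)
    (hA : #A + r = n) (hr : 1 ≤ r) (hrn : r < n) :
    orderStat Z r ω = Z i ω ∧ s < orderStat Z (r + 1) ω := by
  have hcard : #{j | Z j ω ≤ s} = r := by
    rw [h.filter_le_eq_compl, card_compl, Fintype.card_fin]
    omega
  refine ⟨le_antisymm ?_ ?_, ?_⟩
  · rw [orderStat_le_iff Z ω hr hrn.le, ← hcard]
    refine card_le_card fun j => ?_
    simp only [mem_filter, mem_univ, true_and, h.filter_le_eq_compl, mem_compl]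
    intro hjA
    rcases eq_or_ne j i with rfl | hji
    · exact le_rfl
    · exact (h.2.1 j hjA hji).le
  · by_contra hlt
    have hle := (orderStat_le_iff Z ω hr hrn.le _).1 le_rfl
    have hsub : ({j | Z j ω ≤ orderStat Z r ω} : Finset _)
        ⊆ ({j | Z j ω ≤ s} : Finset _).erase i := by
      intro j
      simp only [mem_filter, mem_univ, true_and, mem_erase]
      intro hj
      exact ⟨fun hji => (hji ▸ hj).not_gt (not_le.1 hlt), hj.trans ((not_le.1 hlt).le.trans h.2.2)⟩
    have := card_le_card hsub
    rw [card_erase_of_mem (by simpa using h.2.2), hcard] at this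
    omega
  · rw [← not_le, orderStat_le_iff Z ω (by omega) hrn, hcard]
    omega

theorem exists_isPivot_of_orderStat (hinj : Function.Injective (Z · ω)) (hr : 1 ≤ r)
    (hrn : r < n) (hle : orderStat Z r ω ≤ s) (hlt : s < orderStat Z (r + 1) ω) :
    ∃ i, ∃ A, #A + r = n ∧ IsPivot (Z · ω) s A i ∧ orderStat Z r ω = Z i ω := by
  have hcard : #{j | Z j ω ≤ s} = r := by
    have h1 := (orderStat_le_iff Z ω hr hrn.le s).1 hle
    have h2 := (orderStat_le_iff Z ω (by omega) hrn s).not.1 hlt.not_ge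
    omega
  obtain ⟨i, hi⟩ := exists_eq_orderStat Z ω hr hrn.le
  have hsame : ({j | Z j ω ≤ s} : Finset (Fin n)) = ({j | Z j ω ≤ Z i ω} : Finset (Fin n)) := by
    refine (eq_of_subset_of_card_le (fun j => ?_) ?_).symm
    · simp only [mem_filter, mem_univ, true_and]
      exact fun hj => hj.trans (hi.trans_le hle)
    · rw [hcard, ← orderStat_le_iff Z ω hr hrn.le, hi]
  refine ⟨i, ({j | Z j ω ≤ s} : Finset (Fin n))ᶜ, ?_, ⟨fun j hj => ?_, fun j hj hji => ?_,
    hi.trans_le hle⟩, hi.symm⟩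
  · rw [card_compl, Fintype.card_fin, hcard]
    omega
  · simpa using hj
  · rw [mem_compl, not_not, hsame] at hj
    exact lt_of_le_of_ne (by simpa using hj) (hinj.ne hji)

end OrderStatisticsPivot

open scoped Pointwise in
theorem Equiv.Perm.exists_map_eq_and_apply_eq {α : Type*} [Fintype α] [DecidableEq α]
    {A B : Finset α} (hAB : #A = #B) {a b : α} (ha : a ∉ A) (hb : b ∉ B) :
    ∃ σ : Equiv.Perm α, A.map σ.toEmbedding = B ∧ σ a = b := by
  have := Set.powersetCard.isPretransitive (α := α) (n := #A)
  obtain ⟨τ, hτ⟩ := MulAction.exists_smul_eq (Equiv.Perm α)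
    (⟨A, rfl⟩ : Set.powersetCard α #A) ⟨B, hAB.symm⟩
  have hτB : A.map τ.toEmbedding = B := by
    have hτ' : τ • A = B := by simpa using congrArg Subtype.val hτ
    rw [← hτ', map_eq_image]
    rfl
  have hτa : τ a ∉ B := by
    rw [← hτB, mem_map_equiv, Equiv.symm_apply_apply]
    exact ha
  refine ⟨(Equiv.swap (τ a) b) * τ, ?_, by simp⟩
  rw [Equiv.Perm.mul_def, Equiv.trans_toEmbedding, ← Finset.map_map, hτB]
  refine map_eq_of_subset fun c hc => ?_
  obtain ⟨d, hd, rfl⟩ := mem_map.1 hc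
  rwa [Equiv.toEmbedding_apply, Equiv.swap_apply_of_ne_of_ne (ne_of_mem_of_not_mem hd hτa)
    (ne_of_mem_of_not_mem hd hb)]

theorem MeasureTheory.MeasurePreserving.map_withDensity_of_invariant {α : Type*}
    [MeasurableSpace α] {μ : Measure α} {e : α ≃ᵐ α} (he : MeasurePreserving e μ μ)
    {f : α → ℝ≥0∞} (hf : ∀ x, f (e x) = f x) : (μ.withDensity f).map e = μ.withDensity f := by
  ext s hs
  rw [Measure.map_apply e.measurable hs, withDensity_apply _ (e.measurable hs),
    withDensity_apply _ hs, ← he.setLIntegral_comp_preimage_emb e.measurableEmbedding f s]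
  simp_rw [hf]

theorem volume_setOf_apply_eq_apply {n : ℕ} {i j : Fin n} (hij : i ≠ j) :
    volume {x : Fin n → ℝ | x i = x j} = 0 := by
  let φ : (Fin n → ℝ) →ₗ[ℝ] ℝ := LinearMap.proj (R := ℝ) (φ := fun _ => ℝ) i - LinearMap.proj j
  have hker : {x : Fin n → ℝ | x i = x j} = LinearMap.ker φ := by
    ext x
    simp [φ, sub_eq_zero]
  rw [hker]
  refine Measure.addHaar_submodule _ _ fun htop => ?_
  have := Submodule.eq_top_iff'.1 htop (Pi.single i 1)
  simp [φ, hij.symm] at this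

theorem ae_injective_volume (n : ℕ) : ∀ᵐ x : Fin n → ℝ, Function.Injective x := by
  simp only [Function.Injective, ae_all_iff]
  intro i j
  rcases eq_or_ne i j with rfl | hij
  · exact Filter.Eventually.of_forall fun _ _ => rfl
  · rw [ae_iff]
    simpa [hij] using volume_setOf_apply_eq_apply hij

section Exchangeability

variable {Ω : Type*} [MeasurableSpace Ω] {P : Measure Ω} {n : ℕ} {Z : Fin n → Ω → ℝ}
  {Zc : Ω → ℝ}

theorem identDistrib_perm_of_symmetric_density (hZ : ∀ i, Measurable (Z i))
    (hZc : Measurable Zc) {f : (Fin n → ℝ) × ℝ → ℝ≥0∞}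
    (hf : ∀ (σ : Equiv.Perm (Fin n)) x z, f (x ∘ σ, z) = f (x, z))
    (hdens : P.map (fun ω => ((fun i => Z i ω), Zc ω)) = volume.withDensity f)
    (σ : Equiv.Perm (Fin n)) :
    IdentDistrib (fun ω => ((fun i => Z (σ i) ω), Zc ω)) (fun ω => ((fun i => Z i ω), Zc ω))
      P P := by
  have hX : Measurable fun ω => ((fun i => Z i ω), Zc ω) := (measurable_pi_lambda _ hZ).prodMk hZc
  let e : ((Fin n → ℝ) × ℝ) ≃ᵐ ((Fin n → ℝ) × ℝ) :=
    (MeasurableEquiv.arrowCongr' σ.symm (MeasurableEquiv.refl ℝ)).prodCongr (MeasurableEquiv.refl ℝ)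
  have he : MeasurePreserving e :=
    (volume_preserving_arrowCongr' σ.symm _ (MeasurePreserving.id _)).prod (MeasurePreserving.id _)
  refine ⟨(e.measurable.comp hX).aemeasurable, hX.aemeasurable, ?_⟩
  rw [show (fun ω => ((fun i => Z (σ i) ω), Zc ω)) = e ∘ fun ω => ((fun i => Z i ω), Zc ω) from rfl,
    ← Measure.map_map e.measurable hX, hdens]
  exact he.map_withDensity_of_invariant fun p => hf σ p.1 p.2

theorem ae_injective_of_map_eq_withDensity (hZ : ∀ i, Measurable (Z i)) (hZc : Measurable Zc)
    {f : (Fin n → ℝ) × ℝ → ℝ≥0∞}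
    (hdens : P.map (fun ω => ((fun i => Z i ω), Zc ω)) = volume.withDensity f) :
    ∀ᵐ ω ∂P, Function.Injective (Z · ω) := by
  have hX : Measurable fun ω => ((fun i => Z i ω), Zc ω) := (measurable_pi_lambda _ hZ).prodMk hZc
  refine ae_of_ae_map (p := fun p => Function.Injective p.1) hX.aemeasurable ?_
  rw [hdens]
  exact (withDensity_absolutelyContinuous _ _).ae_le
    (Measure.quasiMeasurePreserving_fst.ae (ae_injective_volume n))

end Exchangeability

section PivotEvent

variable {Ω : Type*} {n : ℕ} (Z : Fin n → Ω → ℝ) (Zc : Ω → ℝ) (s t : ℝ)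

/-- On this event `Z i` is `Z_{n - #A : n}`, `A` is the set of components exceeding `s`, and the
cold standby carries the system past `s`. -/
def pivotEvent (A : Finset (Fin n)) (i : Fin n) : Set Ω :=
  {ω | IsPivot (Z · ω) s A i ∧ s < Z i ω + Zc ω ∧ t ≤ Z i ω}

variable {Z Zc s t}

theorem pivotEvent_comp_perm (σ : Equiv.Perm (Fin n)) (A : Finset (Fin n)) (i : Fin n) :
    pivotEvent (fun j => Z (σ j)) Zc s t A i
      = pivotEvent Z Zc s t (A.map σ.toEmbedding) (σ i) := by
  ext ω
  simp only [pivotEvent, IsPivot, Set.mem_ofPred_eq, forall_mem_map, Equiv.toEmbedding_apply]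
  rw [σ.symm.forall_congr_left
    (p := fun j => j ∉ A.map σ.toEmbedding → j ≠ σ i → Z j ω < Z (σ i) ω)]
  simp only [Equiv.symm_symm, mem_map_equiv, σ.symm_apply_apply, σ.injective.ne_iff]

theorem measurableSet_pivotEvent [MeasurableSpace Ω] (hZ : ∀ i, Measurable (Z i))
    (hZc : Measurable Zc) (A : Finset (Fin n)) (i : Fin n) :
    MeasurableSet (pivotEvent Z Zc s t A i) := by
  simp only [pivotEvent, IsPivot, Set.ofPred_and, Set.ofPred_forall]
  measurability

variable {r : ℕ}

theorem mem_iUnion_pivotEvent_iff {ω : Ω} (hinj : Function.Injective (Z · ω)) (hr : 1 ≤ r)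
    (hrn : r < n) :
    ω ∈ ⋃ i, ⋃ A ∈ (univ.erase i).powersetCard (n - r), pivotEvent Z Zc s t A i ↔
      s < orderStat Z (r + 1) ω ∧ s < orderStat Z r ω + Zc ω ∧ t ≤ orderStat Z r ω ∧
        orderStat Z r ω ≤ s := by
  simp only [Set.mem_iUnion, mem_powersetCard, subset_erase, exists_prop]
  constructor
  · rintro ⟨i, A, ⟨-, hA⟩, hpivot, hc, ht⟩
    obtain ⟨heq, hlt⟩ := orderStat_eq_of_isPivot hpivot (by omega) hr hrn
    rw [heq]
    exact ⟨hlt, hc, ht, hpivot.2.2⟩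
  · rintro ⟨hlt, hc, ht, hle⟩
    obtain ⟨i, A, hA, hpivot, heq⟩ := exists_isPivot_of_orderStat hinj hr hrn hle hlt
    rw [heq] at hc ht
    exact ⟨i, A, ⟨⟨subset_univ A, hpivot.notMem⟩, by omega⟩, hpivot, hc, ht⟩

theorem pivotEvent_Iio_last {m : ℕ} (hmn : m < n) :
    pivotEvent Z Zc s t (Iio ⟨m, hmn⟩) ⟨n - 1, by omega⟩
      = {ω | (∀ j : Fin n, (j : ℕ) < m → s < Z j ω) ∧ s < Z ⟨n - 1, by omega⟩ ω + Zc ω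
          ∧ (∀ j : Fin n, m ≤ (j : ℕ) → (j : ℕ) < n - 1 → Z j ω < Z ⟨n - 1, by omega⟩ ω)
          ∧ t ≤ Z ⟨n - 1, by omega⟩ ω ∧ Z ⟨n - 1, by omega⟩ ω ≤ s} := by
  have hmid : ∀ j : Fin n, (¬ (j : ℕ) < m ∧ j ≠ ⟨n - 1, by omega⟩) ↔ m ≤ j ∧ (j : ℕ) < n - 1 := by
    intro j
    simp only [ne_eq, Fin.ext_iff]
    omega
  ext ω
  simp only [pivotEvent, IsPivot, Set.mem_ofPred_eq, mem_Iio, Fin.lt_def, ← and_imp, hmid]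
  tauto

variable [MeasurableSpace Ω] {P : Measure Ω}

theorem measure_iUnion_pivotEvent (hZ : ∀ i, Measurable (Z i)) (hZc : Measurable Zc)
    (𝒜 : Fin n → Finset (Finset (Fin n))) :
    P (⋃ i, ⋃ A ∈ 𝒜 i, pivotEvent Z Zc s t A i)
      = ∑ i, ∑ A ∈ 𝒜 i, P (pivotEvent Z Zc s t A i) := by
  rw [measure_iUnion, tsum_fintype]
  · refine sum_congr rfl fun i _ => measure_biUnion_finset ?_ fun A _ => ?_
    · exact fun A _ A' _ hne => Set.disjoint_left.2 fun ω hω hω' => hne (hω.1.unique hω'.1).1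
    · exact measurableSet_pivotEvent hZ hZc A i
  · intro i i' hne
    refine Set.disjoint_left.2 fun ω hω hω' => ?_
    simp only [Set.mem_iUnion] at hω hω'
    obtain ⟨A, -, hω⟩ := hω
    obtain ⟨A', -, hω'⟩ := hω'
    exact hne (hω.1.unique hω'.1).2
  · exact fun i => Finset.measurableSet_biUnion _ fun A _ => measurableSet_pivotEvent hZ hZc A i

theorem measure_pivotEvent_eq
    (hident : ∀ σ : Equiv.Perm (Fin n),
      IdentDistrib (fun ω => ((fun i => Z (σ i) ω), Zc ω)) (fun ω => ((fun i => Z i ω), Zc ω)) P P)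
    {A A' : Finset (Fin n)} {i i' : Fin n} (hAA' : #A = #A') (hi : i ∉ A) (hi' : i' ∉ A') :
    P (pivotEvent Z Zc s t A' i') = P (pivotEvent Z Zc s t A i) := by
  obtain ⟨σ, rfl, rfl⟩ := Equiv.Perm.exists_map_eq_and_apply_eq hAA' hi hi'
  rw [← pivotEvent_comp_perm]
  exact (hident σ).measure_mem_eq <|
    measurableSet_pivotEvent (fun j => (measurable_pi_apply j).comp measurable_fst) measurable_snd A i

theorem measure_orderStat_event_eq (hZ : ∀ i, Measurable (Z i)) (hZc : Measurable Zc)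
    (hident : ∀ σ : Equiv.Perm (Fin n),
      IdentDistrib (fun ω => ((fun i => Z (σ i) ω), Zc ω)) (fun ω => ((fun i => Z i ω), Zc ω)) P P)
    (hinj : ∀ᵐ ω ∂P, Function.Injective (Z · ω)) (hr : 1 ≤ r) (hrn : r < n)
    {A₀ : Finset (Fin n)} {i₀ : Fin n} (hA₀ : #A₀ = n - r) (hi₀ : i₀ ∉ A₀) :
    P {ω | s < orderStat Z (r + 1) ω ∧ s < orderStat Z r ω + Zc ω ∧ t ≤ orderStat Z r ω ∧
        orderStat Z r ω ≤ s}
      = (n * (n - 1).choose (r - 1) : ℕ) * P (pivotEvent Z Zc s t A₀ i₀) := by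
  have hunion : {ω | s < orderStat Z (r + 1) ω ∧ s < orderStat Z r ω + Zc ω ∧
      t ≤ orderStat Z r ω ∧ orderStat Z r ω ≤ s}
        =ᵐ[P] ⋃ i, ⋃ A ∈ (univ.erase i).powersetCard (n - r), pivotEvent Z Zc s t A i := by
    filter_upwards [hinj] with ω hω
    exact propext (mem_iUnion_pivotEvent_iff hω hr hrn).symm
  have hterm : ∀ i, ∀ A ∈ (univ.erase i).powersetCard (n - r),
      P (pivotEvent Z Zc s t A i) = P (pivotEvent Z Zc s t A₀ i₀) := by
    intro i A hA
    rw [mem_powersetCard, subset_erase] at hA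
    exact measure_pivotEvent_eq hident (hA₀.trans hA.2.symm) hi₀ hA.1.2
  rw [measure_congr hunion, measure_iUnion_pivotEvent hZ hZc,
    sum_congr rfl fun i _ => sum_congr rfl (hterm i)]
  simp only [sum_const, card_powersetCard, card_erase_of_mem (mem_univ _), card_univ,
    Fintype.card_fin, nsmul_eq_mul]
  rw [Nat.choose_symm_of_eq_add (by omega : n - 1 = (n - r) + (r - 1))]
  push_cast
  ring

end PivotEvent

theorem joint_prob_reduction_cold_standby
    {Ω : Type*} [MeasurableSpace Ω] (P : Measure Ω)
    (n k : ℕ) (hk2 : 2 ≤ k) (hkn : k ≤ n)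
    (Z : Fin n → Ω → ℝ) (Zc : Ω → ℝ)
    (hZm : ∀ i, Measurable (Z i)) (hZcm : Measurable Zc)
    (h : (Fin n → ℝ) → ℝ → ℝ)
    (hsymm : ∀ σ : Equiv.Perm (Fin n), ∀ z zl, h (z ∘ σ) zl = h z zl)
    (hdens : Measure.map (fun ω => ((fun i => Z i ω), Zc ω)) P
      = (volume : Measure ((Fin n → ℝ) × ℝ)).withDensity
          (fun p => ENNReal.ofReal (h p.1 p.2)))
    (T : Ω → ℝ)
    (hT : ∀ ω, T ω = orderStat Z (n - k + 1) ω
      + min (orderStat Z (n - k + 2) ω - orderStat Z (n - k + 1) ω) (Zc ω))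
    (t s : ℝ) :
    (P {ω | s < T ω ∧ t ≤ orderStat Z (n - k + 1) ω ∧ orderStat Z (n - k + 1) ω ≤ s}).toReal
      = (n : ℝ) * ((n - 1).choose (n - k)) *
        (P {ω | (∀ j : Fin n, (j : ℕ) < k - 1 → s < Z j ω)
            ∧ s < Z ⟨n - 1, by omega⟩ ω + Zc ω
            ∧ (∀ j : Fin n, k - 1 ≤ (j : ℕ) → (j : ℕ) < n - 1 → Z j ω < Z ⟨n - 1, by omega⟩ ω)
            ∧ t ≤ Z ⟨n - 1, by omega⟩ ω ∧ Z ⟨n - 1, by omega⟩ ω ≤ s}).toReal := by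
  have hevent : {ω | s < T ω ∧ t ≤ orderStat Z (n - k + 1) ω ∧ orderStat Z (n - k + 1) ω ≤ s}
      = {ω | s < orderStat Z (n - k + 1 + 1) ω ∧ s < orderStat Z (n - k + 1) ω + Zc ω ∧
          t ≤ orderStat Z (n - k + 1) ω ∧ orderStat Z (n - k + 1) ω ≤ s} := by
    ext ω
    simp only [Set.mem_ofPred_eq, hT, lt_add_min_sub_iff, and_assoc]
  have hident := identDistrib_perm_of_symmetric_density hZm hZcm
    (fun σ x z => congrArg ENNReal.ofReal (hsymm σ x z)) hdens
  rw [hevent, ← pivotEvent_Iio_last (by omega : k - 1 < n),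
    measure_orderStat_event_eq hZm hZcm hident (ae_injective_of_map_eq_withDensity hZm hZcm hdens)
      (by omega) (by omega) (A₀ := Iio ⟨k - 1, by omega⟩) (i₀ := ⟨n - 1, by omega⟩)
      (by rw [Fin.card_Iio, Fin.val_mk]; omega) (by simp only [mem_Iio, Fin.lt_def, not_lt]; omega),
    ENNReal.toReal_mul]
  simp [show n - k + 1 - 1 = n - k by omega]
end

section
/- Let Z_1,…,Z_n be exchangeable random variables, let t be real, x ≥ 0, and 1 ≤ i ≤ n−1. Then P(t < Z_1 ≤ t+x, …, t < Z_i ≤ t+x, Z_{i+1} > t+x, …, Z_n > t+x) = P(Z_1 ≤ t+x, …, Z_i ≤ t+x) − Σ_{j=1}^{i} (−1)^{j+1} C(i,j) P(Z_1 ≤ t, …, Z_j ≤ t, Z_{j+1} ≤ t+x, …, Z_i ≤ t+x) − Σ_{j=1}^{n−i} (−1)^{j+1} C(n−i,j) P(Z_1 ≤ t+x, …, Z_{i+j} ≤ t+x) + Σ_{j=1}^{i} Σ_{m=1}^{n−i} (−1)^{j+m} C(i,j) C(n−i,m) P(Z_1 ≤ t, …, Z_j ≤ t, Z_{j+1} ≤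 t+x, …, Z_{i+m} ≤ t+x). -/
open MeasureTheory ProbabilityTheory

/-- The event `{Z_1 ≤ t, …, Z_j ≤ t, Z_{j+1} ≤ s, …, Z_i ≤ s}` (1-indexed components). -/
def cdfEvent {Ω : Type*} {n : ℕ} (Z : Fin n → Ω → ℝ) (j i : ℕ) (t s : ℝ) : Set Ω :=
  {ω | ∀ l : Fin n, ((l : ℕ) < j → Z l ω ≤ t) ∧ (j ≤ (l : ℕ) → (l : ℕ) < i → Z l ω ≤ s)}

/-!
With `s = t + x`, the event on the left is `⋂ l, A l \ B l` with `B l ⊆ A l`: for `l < i`,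
`A l = {Z_l ≤ s}` and `B l = {Z_l ≤ t}`; for `l ≥ i`, `A l` is everything and `B l = {Z_l ≤ s}`.
Expanding `∏ l, (1_{A l} - 1_{B l})` writes its probability as an alternating sum, over sets `T`
of indices, of `P(⋂_{l ∈ T} B l ∩ ⋂_{l ∉ T} A l)`. This event asks `Z_l ≤ t` for `j` indices and
`Z_l ≤ s` for `i + m - j` others, where `j = |T ∩ {l < i}|` and `m = |T \ {l < i}|`, so by
exchangeability it has the probability of `cdfEvent Z j (i + m) t s`. Counting the `T` with given
`j` and `m` gives the binomial coefficients.
-/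

open Finset

theorem exists_perm_comp_eq_of_card_fiber_eq {ι α : Type*} [Fintype ι] [DecidableEq α]
    {f g : ι → α} (h : ∀ a, #{l | f l = a} = #{l | g l = a}) :
    ∃ σ : Equiv.Perm ι, f ∘ σ = g := by
  have e (a : α) : {l // g l = a} ≃ {l // f l = a} :=
    Fintype.equivOfCardEq (by simp only [Fintype.card_subtype, h])
  refine ⟨(Equiv.sigmaFiberEquiv g).symm.trans
    ((Equiv.sigmaCongrRight e).trans (Equiv.sigmaFiberEquiv f)), funext fun l => ?_⟩
  exact (e (g l) ⟨l, rfl⟩).2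

theorem sum_finset_apply_card_inter_sdiff {α M : Type*} [Fintype α] [DecidableEq α]
    [AddCommMonoid M] (u : Finset α) (F : ℕ → ℕ → M) :
    ∑ T : Finset α, F #(T ∩ u) #(T \ u)
      = ∑ j ∈ range (#u + 1), ∑ m ∈ range (#uᶜ + 1),
          ((#u).choose j * (#uᶜ).choose m) • F j m := by
  calc ∑ T : Finset α, F #(T ∩ u) #(T \ u)
        = ∑ p ∈ u.powerset ×ˢ uᶜ.powerset, F #p.1 #p.2 := by
        refine sum_nbij' (fun T => (T ∩ u, T \ u)) (fun p => p.1 ∪ p.2) ?_ ?_ ?_ ?_ ?_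
        · intro T _
          simp [inter_subset_right, sdiff_eq_inter_compl]
        · simp
        · exact fun T _ => sup_inf_sdiff T u
        · rintro ⟨J, M⟩ h
          obtain ⟨hJ, hM⟩ : J ⊆ u ∧ Disjoint M u := by
            simpa only [mem_product, mem_powerset, subset_compl_iff_disjoint_right] using h
          simp [union_inter_distrib_right, union_sdiff_distrib, inter_eq_left.2 hJ,
            disjoint_iff_inter_eq_empty.1 hM, sdiff_eq_empty_iff_subset.2 hJ, hM.sdiff_eq_left]
        · simp
    _ = _ := by
        rw [sum_product, sum_powerset_apply_card (fun j => ∑ M ∈ uᶜ.powerset, F j #M)]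
        refine sum_congr rfl fun j _ => ?_
        rw [sum_powerset_apply_card (F j), smul_sum]
        simp only [smul_smul]

theorem sum_range_succ_eq_add_sum_Icc {M : Type*} [AddCommMonoid M] (f : ℕ → M) (k : ℕ) :
    ∑ j ∈ range (k + 1), f j = f 0 + ∑ j ∈ Icc 1 k, f j := by
  rw [range_eq_Ico, Ico_add_one_right_eq_Icc, ← insert_Icc_add_one_left_eq_Icc k.zero_le,
    sum_insert (by simp), zero_add]

theorem sum_range_choose_smul_neg_one_pow_split_zero {R : Type*} [CommRing R] (a b : ℕ)
    (q : ℕ → ℕ → R) :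
    ∑ j ∈ range (a + 1), ∑ m ∈ range (b + 1), (a.choose j * b.choose m) • ((-1) ^ (j + m) * q j m)
      = q 0 0 - ∑ j ∈ Icc 1 a, (-1) ^ (j + 1) * (a.choose j : R) * q j 0
        - ∑ m ∈ Icc 1 b, (-1) ^ (m + 1) * (b.choose m : R) * q 0 m
        + ∑ j ∈ Icc 1 a, ∑ m ∈ Icc 1 b,
            (-1) ^ (j + m) * (a.choose j : R) * (b.choose m) * q j m := by
  simp only [sum_range_succ_eq_add_sum_Icc, sum_add_distrib, nsmul_eq_mul, Nat.cast_mul,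
    Nat.choose_zero_right, Nat.cast_one, one_mul, mul_one, add_zero, zero_add, pow_zero, pow_succ,
    sub_eq_add_neg, ← sum_neg_distrib, neg_mul, mul_neg, neg_neg]
  ring_nf

theorem Set.indicator_iInter_sdiff_eq_sum {ι Ω R : Type*} [Fintype ι] [DecidableEq ι]
    [CommRing R] {A B : ι → Set Ω} (hBA : ∀ l, B l ⊆ A l) (ω : Ω) :
    (⋂ l, A l \ B l).indicator (1 : Ω → R) ω
      = ∑ T : Finset ι, (-1) ^ #T * (⋂ l, if l ∈ T then B l else A l).indicator 1 ω := by
  have hprod (C : ι → Set Ω) :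
      (⋂ l, C l).indicator (1 : Ω → R) ω = ∏ l, (C l).indicator 1 ω := by
    simp [prod_indicator_apply]
  simp only [hprod, Set.indicator_sdiff (hBA _), Pi.sub_apply, prod_sub,
    apply_ite (Set.indicator · (1 : Ω → R) ω), prod_ite]
  refine sum_congr rfl fun T _ => ?_
  simp only [sdiff_eq_filter, filter_mem_eq_inter, Finset.univ_inter]
  ring

theorem measureReal_iInter_sdiff_eq_sum {ι Ω : Type*} [Fintype ι] [DecidableEq ι]
    [MeasurableSpace Ω] (μ : Measure Ω) [IsFiniteMeasure μ] {A B : ι → Set Ω}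
    (hA : ∀ l, MeasurableSet (A l)) (hB : ∀ l, MeasurableSet (B l)) (hBA : ∀ l, B l ⊆ A l) :
    μ.real (⋂ l, A l \ B l)
      = ∑ T : Finset ι, (-1) ^ #T * μ.real (⋂ l, if l ∈ T then B l else A l) := by
  have hmeas (T : Finset ι) : MeasurableSet (⋂ l, if l ∈ T then B l else A l) :=
    .iInter fun l => by split_ifs; exacts [hB l, hA l]
  rw [← integral_indicator_one (.iInter fun l => (hA l).diff (hB l))]
  simp_rw [Set.indicator_iInter_sdiff_eq_sum hBA]
  rw [integral_finsetSum _ fun T _ => ((integrable_const 1).indicator (hmeas T)).const_mul _]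
  simp only [integral_const_mul, integral_indicator_one (hmeas _)]

def Exchangeable {Ω ι β : Type*} [MeasurableSpace Ω] [MeasurableSpace β] (P : Measure Ω)
    (Z : ι → Ω → β) : Prop :=
  ∀ σ : Equiv.Perm ι,
    Measure.map (fun ω => fun i => Z (σ i) ω) P = Measure.map (fun ω => fun i => Z i ω) P

def levelEvent {Ω ι : Type*} (Z : ι → Ω → ℝ) (t s : ℝ) (f : ι → Fin 3) : Set Ω :=
  {ω | ∀ l, Z l ω ∈ ![Set.Iic t, Set.Iic s, Set.univ] (f l)}

def nestedLabel {ι : Type*} [DecidableEq ι] (A B : Finset ι) (l : ι) : Fin 3 :=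
  if l ∈ A then 0 else if l ∈ B then 1 else 2

theorem card_filter_nestedLabel {ι : Type*} [Fintype ι] [DecidableEq ι] {A B : Finset ι}
    (hAB : A ⊆ B) (a : Fin 3) :
    #{l | nestedLabel A B l = a} = ![#A, #B - #A, Fintype.card ι - #B] a := by
  have hfib : ({l | nestedLabel A B l = a} : Finset ι) = ![A, B \ A, Bᶜ] a := by
    ext l
    rw [mem_filter_univ, nestedLabel]
    have := @hAB l
    fin_cases a <;> split_ifs <;> simp_all
  rw [hfib]
  fin_cases a <;> simp [card_sdiff_of_subset hAB, card_compl]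

theorem cdfEvent_eq_levelEvent {Ω : Type*} {n : ℕ} (Z : Fin n → Ω → ℝ) (j k : ℕ) (t s : ℝ) :
    cdfEvent Z j k t s
      = levelEvent Z t s (nestedLabel {l : Fin n | l < j} {l : Fin n | l < k}) := by
  ext ω
  refine forall_congr' fun l => ?_
  simp only [nestedLabel, mem_filter_univ]
  split_ifs <;> simp [*]; omega

theorem measureReal_window_eq_sum {Ω ι : Type*} [MeasurableSpace Ω] [Fintype ι] [DecidableEq ι]
    (μ : Measure Ω) [IsFiniteMeasure μ] {Z : ι → Ω → ℝ} (hZm : ∀ l, Measurable (Z l))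
    {t s : ℝ} (hts : t ≤ s) (lo : Finset ι) :
    μ.real {ω | (∀ l ∈ lo, t < Z l ω ∧ Z l ω ≤ s) ∧ ∀ l ∉ lo, s < Z l ω}
      = ∑ T : Finset ι, (-1) ^ #T * μ.real (levelEvent Z t s (nestedLabel (T ∩ lo) (T ∪ lo))) := by
  set A : ι → Set Ω := fun l => {ω | l ∈ lo → Z l ω ≤ s}
  set B : ι → Set Ω := fun l => {ω | Z l ω ≤ if l ∈ lo then t else s}
  have hA (l : ι) : MeasurableSet (A l) := by
    by_cases hl : l ∈ lo
    · simpa [A, hl] using measurableSet_le (hZm l) measurable_const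
    · simp [A, hl]
  have hB (l : ι) : MeasurableSet (B l) := measurableSet_le (hZm l) measurable_const
  have hBA (l : ι) : B l ⊆ A l := fun ω hω hl => hω.trans (by simp [hl, hts])
  have hE : {ω | (∀ l ∈ lo, t < Z l ω ∧ Z l ω ≤ s) ∧ ∀ l ∉ lo, s < Z l ω} = ⋂ l, A l \ B l := by
    ext ω
    simp only [Set.mem_iInter, ← forall_and]
    refine forall_congr' fun l => ?_
    by_cases hl : l ∈ lo <;> simp [A, B, hl, and_comm]
  have hT (T : Finset ι) :
      (⋂ l, if l ∈ T then B l else A l) = levelEvent Z t s (nestedLabel (T ∩ lo) (T ∪ lo)) := by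
    ext ω
    simp only [Set.mem_iInter]
    refine forall_congr' fun l => ?_
    by_cases hlT : l ∈ T <;> by_cases hl : l ∈ lo <;> simp [A, B, nestedLabel, hlT, hl]
  rw [hE, measureReal_iInter_sdiff_eq_sum μ hA hB hBA]
  simp only [hT]

namespace Exchangeable

variable {Ω ι β : Type*} [MeasurableSpace Ω] [MeasurableSpace β] {P : Measure Ω}
  {Z : ι → Ω → β}

theorem measure_forall_mem_comp_perm [Countable ι] (hZ : Exchangeable P Z)
    (hZm : ∀ l, Measurable (Z l)) {U : ι → Set β} (hU : ∀ l, MeasurableSet (U l))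
    (σ : Equiv.Perm ι) :
    P {ω | ∀ l, Z l ω ∈ U (σ l)} = P {ω | ∀ l, Z l ω ∈ U l} := by
  have hpi : MeasurableSet (Set.univ.pi U) := .univ_pi hU
  have hσ : {ω | ∀ l, Z l ω ∈ U (σ l)} = (fun ω l => Z (σ.symm l) ω) ⁻¹' Set.univ.pi U := by
    ext ω
    simp only [Set.mem_ofPred_eq, Set.mem_preimage, Set.mem_univ_pi]
    exact ⟨fun h l => by simpa using h (σ.symm l), fun h l => by simpa using h (σ l)⟩
  rw [hσ, ← Measure.map_apply (measurable_pi_lambda _ fun l => hZm _) hpi, hZ σ.symm,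
    Measure.map_apply (measurable_pi_lambda _ hZm) hpi]
  congr 1
  ext ω
  simp

theorem measure_forall_mem_comp_eq [Fintype ι] {α : Type*} [DecidableEq α]
    (hZ : Exchangeable P Z) (hZm : ∀ l, Measurable (Z l)) {V : α → Set β}
    (hV : ∀ a, MeasurableSet (V a)) {f g : ι → α}
    (hfg : ∀ a, #{l | f l = a} = #{l | g l = a}) :
    P {ω | ∀ l, Z l ω ∈ V (f l)} = P {ω | ∀ l, Z l ω ∈ V (g l)} := by
  obtain ⟨σ, rfl⟩ := exists_perm_comp_eq_of_card_fiber_eq hfg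
  exact (hZ.measure_forall_mem_comp_perm hZm (fun l => hV (f l)) σ).symm

theorem measure_levelEvent_nestedLabel {n : ℕ} {Z : Fin n → Ω → ℝ} (hZ : Exchangeable P Z)
    (hZm : ∀ l, Measurable (Z l)) {A B : Finset (Fin n)} (hAB : A ⊆ B) (t s : ℝ) :
    P (levelEvent Z t s (nestedLabel A B)) = P (cdfEvent Z #A #B t s) := by
  have hV (a : Fin 3) : MeasurableSet (![Set.Iic t, Set.Iic s, Set.univ] a) := by
    fin_cases a <;> simp [measurableSet_Iic]
  have hcard (C : Finset (Fin n)) : #{l : Fin n | l < #C} = #C := by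
    simpa [Fin.card_filter_val_lt] using C.card_le_univ
  have hmono : ({l : Fin n | l < #A} : Finset (Fin n)) ⊆ ({l : Fin n | l < #B} : Finset _) :=
    fun l => by simpa using fun hl => hl.trans_le (card_le_card hAB)
  rw [cdfEvent_eq_levelEvent]
  refine hZ.measure_forall_mem_comp_eq hZm hV fun a => ?_
  rw [card_filter_nestedLabel hAB, card_filter_nestedLabel hmono, hcard, hcard]

end Exchangeable

theorem inclusion_exclusion_exchangeable_general
    {Ω : Type*} [MeasurableSpace Ω] (P : Measure Ω) [IsProbabilityMeasure P]
    (n : ℕ) (Z : Fin n → Ω → ℝ) (hZm : ∀ i, Measurable (Z i))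
    (hexch : ∀ σ : Equiv.Perm (Fin n),
      Measure.map (fun ω => fun i => Z (σ i) ω) P = Measure.map (fun ω => fun i => Z i ω) P)
    (t x : ℝ) (hx : 0 ≤ x) (i : ℕ) (hin : i ≤ n - 1) :
    (P {ω | (∀ l : Fin n, (l : ℕ) < i → t < Z l ω ∧ Z l ω ≤ t + x)
        ∧ (∀ l : Fin n, i ≤ (l : ℕ) → t + x < Z l ω)}).toReal
      = (P (cdfEvent Z 0 i t (t + x))).toReal
        - (∑ j ∈ Finset.Icc 1 i, (-1 : ℝ) ^ (j + 1) * (i.choose j) *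
            (P (cdfEvent Z j i t (t + x))).toReal)
        - (∑ j ∈ Finset.Icc 1 (n - i), (-1 : ℝ) ^ (j + 1) * ((n - i).choose j) *
            (P (cdfEvent Z 0 (i + j) t (t + x))).toReal)
        + ∑ j ∈ Finset.Icc 1 i, ∑ m ∈ Finset.Icc 1 (n - i),
            (-1 : ℝ) ^ (j + m) * (i.choose j) * ((n - i).choose m) *
              (P (cdfEvent Z j (i + m) t (t + x))).toReal := by
  have hZ : Exchangeable P Z := hexch
  set s := t + x
  set lo : Finset (Fin n) := {l | l < i}
  have hlo : #lo = i := by simp only [lo, Fin.card_filter_val_lt]; omega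
  have hhi : #loᶜ = n - i := by rw [card_compl, Fintype.card_fin, hlo]
  have hwindow : {ω | (∀ l : Fin n, (l : ℕ) < i → t < Z l ω ∧ Z l ω ≤ s)
      ∧ (∀ l : Fin n, i ≤ (l : ℕ) → s < Z l ω)}
      = {ω | (∀ l ∈ lo, t < Z l ω ∧ Z l ω ≤ s) ∧ ∀ l ∉ lo, s < Z l ω} := by
    simp [lo]
  simp only [← measureReal_def, hwindow]
  rw [measureReal_window_eq_sum P hZm (le_add_of_nonneg_right hx : t ≤ s) lo]
  calc ∑ T : Finset (Fin n), (-1) ^ #T * P.real (levelEvent Z t s (nestedLabel (T ∩ lo) (T ∪ lo)))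
      = ∑ T : Finset (Fin n), (-1) ^ (#(T ∩ lo) + #(T \ lo))
          * P.real (cdfEvent Z #(T ∩ lo) (i + #(T \ lo)) t s) := by
        refine sum_congr rfl fun T _ => ?_
        rw [card_inter_add_card_sdiff, measureReal_def, measureReal_def,
          hZ.measure_levelEvent_nestedLabel hZm (inter_subset_left.trans subset_union_left),
          ← card_sdiff_add_card, hlo, add_comm]
    _ = _ := by
        rw [sum_finset_apply_card_inter_sdiff lo
          (fun j m => (-1 : ℝ) ^ (j + m) * P.real (cdfEvent Z j (i + m) t s)), hlo, hhi,
          sum_range_choose_smul_neg_one_pow_split_zero]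
        simp only [add_zero]

theorem inclusion_exclusion_exchangeable
    {Ω : Type*} [MeasurableSpace Ω] (P : Measure Ω) [IsProbabilityMeasure P]
    (n : ℕ) (Z : Fin n → Ω → ℝ) (hZm : ∀ i, Measurable (Z i))
    (hexch : ∀ σ : Equiv.Perm (Fin n),
      Measure.map (fun ω => fun i => Z (σ i) ω) P = Measure.map (fun ω => fun i => Z i ω) P)
    (t x : ℝ) (hx : 0 ≤ x) (i : ℕ) (hi1 : 1 ≤ i) (hin : i ≤ n - 1) :
    (P {ω | (∀ l : Fin n, (l : ℕ) < i → t < Z l ω ∧ Z l ω ≤ t + x)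
        ∧ (∀ l : Fin n, i ≤ (l : ℕ) → t + x < Z l ω)}).toReal
      = (P (cdfEvent Z 0 i t (t + x))).toReal
        - (∑ j ∈ Finset.Icc 1 i, (-1 : ℝ) ^ (j + 1) * (i.choose j) *
            (P (cdfEvent Z j i t (t + x))).toReal)
        - (∑ j ∈ Finset.Icc 1 (n - i), (-1 : ℝ) ^ (j + 1) * ((n - i).choose j) *
            (P (cdfEvent Z 0 (i + j) t (t + x))).toReal)
        + ∑ j ∈ Finset.Icc 1 i, ∑ m ∈ Finset.Icc 1 (n - i),
            (-1 : ℝ) ^ (j + m) * (i.choose j) * ((n - i).choose m) *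
              (P (cdfEvent Z j (i + m) t (t + x))).toReal :=
  inclusion_exclusion_exchangeable_general P n Z hZm hexch t x hx i hin
end
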